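/- Relation head of the PT construction (β→∞ limit): Consider the relation head with weights W_KQ^rel = β(Σ_{l=1}^L E(r_l) + p)E([sep])^T and W_OV^rel = Σ_{l=1}^L (Σ_{u∈U_l} E(u)) E(r_l)^T, where p = Σ_{i=1}^{S+2} E(p_{-i+1}). For every PT sequence X whose last block has attribute type l_N, as β→∞ the attention at the last position concentrates entirely on the relation token of the last block, so that lim_{β→∞} g_rel(X) = E(r_{l_N}) and lim_{β→∞} W_OV^rel g_rel(X) = Σ_{u∈U_{l_N}} E(u), i.e., the head outputs the sum of all attribute values of type l_N. -/

import Mathlib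

/-!
With the separator as query, `W_KQ^rel` gives row `j` the logit
`β · ([row j is a relation token] + [row j is among the last S + 2 positions])`. The relation
token of the last block is the only row scoring `2β`, so as `β → ∞` the softmax concentrates on it
and the head returns `E(r_{l_N})`; `W_OV^rel` maps this to the sum of the type-`l_N` attribute
embeddings.
-/

open Filter Topology Finset Matrix

namespace CR

/-- Vocabulary tokens: `M` subjects, `L` attribute types each with `U` values,
`G` grammar tokens, `L` relation tokens, and a separator. -/
inductive Tok (M L U G : ℕ) : Type where
  | subj : Fin M → Tok M L U G
  | attr : Fin L → Fin U → Tok M L U G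
  | gram : Fin G → Tok M L U G
  | rel  : Fin L → Tok M L U G
  | sep  : Tok M L U G
deriving DecidableEq, Fintype

/-- Embedding dimension: one coordinate per vocabulary token plus `P` positional coordinates. -/
abbrev Dim (M L U G P : ℕ) := Tok M L U G ⊕ Fin P

abbrev Vec (M L U G P : ℕ) := Dim M L U G P → ℝ

variable {M L U G P : ℕ}

/-- One-hot token embedding `E(v)`. -/
def E (v : Tok M L U G) : Vec M L U G P :=
  fun i => if i = Sum.inl v then 1 else 0

/-- One-hot positional encoding for relative position `-k`
(`pos 0 = E(p₀)`, `pos 1 = E(p₋₁)`, ...); zero if `k ≥ P`. -/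
def pos (k : ℕ) : Vec M L U G P :=
  fun i => match i with
  | Sum.inl _ => 0
  | Sum.inr j => if (j : ℕ) = k then 1 else 0

/-- Softmax attention weight of (0-indexed) row `j` among rows `0,…,t-1`, with query row `t-1`;
row `i` carries the relative positional encoding `p_{-(t-1-i)}`. -/
noncomputable def attn (W : Matrix (Dim M L U G P) (Dim M L U G P) ℝ)
    (X : ℕ → Vec M L U G P) (t j : ℕ) : ℝ :=
  Real.exp ((X j + pos (t - 1 - j)) ⬝ᵥ W.mulVec (X (t - 1))) /
    ∑ i ∈ Finset.range t, Real.exp ((X i + pos (t - 1 - i)) ⬝ᵥ W.mulVec (X (t - 1)))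

/-- Attention-head output `g_h^t(X)` (attention over the first `t` rows, query at row `t-1`). -/
noncomputable def gHead (W : Matrix (Dim M L U G P) (Dim M L U G P) ℝ)
    (X : ℕ → Vec M L U G P) (t : ℕ) : Vec M L U G P :=
  ∑ j ∈ Finset.range t, attn W X t j • X j

/-- Token at (0-indexed) position `t` of a PT sequence with subject `jstar`:
block `k` occupies positions `k(S+3),…,k(S+3)+S+1` (subject, `S` middle tokens, separator),
followed (except after the last block) by the attribute `a_{jstar}^{ltype k}`. -/
def ptTok (S : ℕ) (jstar : Fin M) (ltype : ℕ → Fin L)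
    (mid : ℕ → ℕ → Tok M L U G) (a : Fin M → Fin L → Fin U) (t : ℕ) : Tok M L U G :=
  let k := t / (S + 3)
  let r := t % (S + 3)
  if r = 0 then Tok.subj jstar
  else if r ≤ S then mid k (r - 1)
  else if r = S + 1 then Tok.sep
  else Tok.attr (ltype k) (a jstar (ltype k))

/-- Token at (0-indexed) position `t` of an ICL sequence with shared attribute type `lstar`
and subjects `js 0, js 1, …`: the pattern is subject, separator, attribute, subject, … -/
def iclTok (a : Fin M → Fin L → Fin U) (js : ℕ → Fin M) (lstar : Fin L) (t : ℕ) :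
    Tok M L U G :=
  if t % 3 = 0 then Tok.subj (js (t / 3))
  else if t % 3 = 1 then Tok.sep
  else Tok.attr lstar (a (js (t / 3)) lstar)

open Real

section Softmax

variable {ι : Type*} [DecidableEq ι] {s : Finset ι} {c : ι → ℝ} {i₀ : ι}

theorem tendsto_softmax_atTop (hi₀ : i₀ ∈ s) (hmax : ∀ i ∈ s, i ≠ i₀ → c i < c i₀)
    {i : ι} (hi : i ∈ s) :
    Tendsto (fun β : ℝ => exp (β * c i) / ∑ k ∈ s, exp (β * c k)) atTop
      (𝓝 (if i = i₀ then 1 else 0)) := by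
  have hgap : ∀ k ∈ s, Tendsto (fun β : ℝ => exp (β * (c k - c i₀))) atTop
      (𝓝 (if k = i₀ then 1 else 0)) := by
    intro k hk
    by_cases hk₀ : k = i₀
    · simp [hk₀]
    · rw [if_neg hk₀]
      exact tendsto_exp_atBot.comp
        (tendsto_id.atTop_mul_const_of_neg (sub_neg.2 (hmax k hk hk₀)))
  have hden : Tendsto (fun β : ℝ => ∑ k ∈ s, exp (β * (c k - c i₀))) atTop (𝓝 1) := by
    simpa [Finset.sum_ite_eq', hi₀] using tendsto_finsetSum s hgap
  -- divide numerator and denominator by `exp (β * c i₀)`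
  convert (hgap i hi).div hden one_ne_zero using 1
  · funext β
    simp only [Pi.div_apply, mul_sub, exp_sub, ← Finset.sum_div]
    rw [div_div_div_cancel_right₀ (exp_pos _).ne']
  · rw [div_one]

theorem tendsto_softmax_sum_smul_atTop {V : Type*} [AddCommMonoid V] [TopologicalSpace V]
    [ContinuousAdd V] [Module ℝ V] [ContinuousSMul ℝ V] (x : ι → V)
    (hi₀ : i₀ ∈ s) (hmax : ∀ i ∈ s, i ≠ i₀ → c i < c i₀) :
    Tendsto (fun β : ℝ => ∑ i ∈ s, (exp (β * c i) / ∑ k ∈ s, exp (β * c k)) • x i) atTop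
      (𝓝 (x i₀)) := by
  have h := tendsto_finsetSum s fun i hi =>
    (tendsto_softmax_atTop hi₀ hmax hi).smul_const (x i)
  simpa [ite_smul, Finset.sum_ite_eq', hi₀] using h

end Softmax

def logit (W : Matrix (Dim M L U G P) (Dim M L U G P) ℝ) (X : ℕ → Vec M L U G P) (t j : ℕ) : ℝ :=
  (X j + pos (t - 1 - j)) ⬝ᵥ W *ᵥ X (t - 1)

theorem attn_smul (β : ℝ) (W : Matrix (Dim M L U G P) (Dim M L U G P) ℝ)
    (X : ℕ → Vec M L U G P) (t j : ℕ) :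
    attn (β • W) X t j = exp (β * logit W X t j) / ∑ i ∈ range t, exp (β * logit W X t i) := by
  simp only [attn, logit, smul_mulVec, dotProduct_smul, smul_eq_mul]

theorem tendsto_gHead_smul_atTop {W : Matrix (Dim M L U G P) (Dim M L U G P) ℝ}
    {X : ℕ → Vec M L U G P} {t j₀ : ℕ} (hj₀ : j₀ < t)
    (hmax : ∀ j < t, j ≠ j₀ → logit W X t j < logit W X t j₀) :
    Tendsto (fun β : ℝ => gHead (β • W) X t) atTop (𝓝 (X j₀)) := by
  simp only [gHead, attn_smul]
  exact tendsto_softmax_sum_smul_atTop X (mem_range.2 hj₀)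
    fun j hj hne => hmax j (mem_range.1 hj) hne

theorem E_eq_single (v : Tok M L U G) : (E v : Vec M L U G P) = Pi.single (Sum.inl v) 1 := by
  funext i
  simp [E, Pi.single_apply]

theorem E_dotProduct (v : Tok M L U G) (x : Vec M L U G P) : E v ⬝ᵥ x = x (Sum.inl v) := by
  rw [E_eq_single, single_one_dotProduct]

theorem pos_dotProduct (k : ℕ) (x : Vec M L U G P) :
    pos k ⬝ᵥ x = if h : k < P then x (Sum.inr ⟨k, h⟩) else 0 := by
  split_ifs with h
  · have hpos : (pos k : Vec M L U G P) = Pi.single (Sum.inr ⟨k, h⟩) 1 := by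
      funext i
      rcases i with i | i <;> simp [pos, Pi.single_apply, Fin.ext_iff]
    rw [hpos, single_one_dotProduct]
  · have hpos : (pos k : Vec M L U G P) = 0 := by
      funext i
      rcases i with i | i
      · rfl
      · simp only [pos, Pi.zero_apply, ite_eq_right_iff, one_ne_zero, imp_false]
        omega
    rw [hpos, zero_dotProduct]

theorem add_pos_dotProduct_relationQuery {m : ℕ} (hm : m ≤ P) (w : Tok M L U G) (k : ℕ) :
    (E w + pos k : Vec M L U G P) ⬝ᵥ ((∑ l : Fin L, E (Tok.rel l)) + ∑ i ∈ range m, pos i) =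
      (if ∃ l, w = Tok.rel l then 1 else 0) + if k < m then 1 else 0 := by
  rw [add_dotProduct, E_dotProduct, pos_dotProduct]
  simp only [Pi.add_apply, Finset.sum_apply, E, pos]
  congr 1
  · rcases w with _ | _ | _ | l₀ | _ <;> simp
  · simp only [reduceCtorEq, if_false, sum_const_zero, sum_ite_eq, mem_range, zero_add]
    split_ifs <;> first | rfl | omega

/-- The paper's `W_KQ^rel` at `β = 1` (with `p` summing the last `m` positional encodings). -/
def relationKQ (m : ℕ) : Matrix (Dim M L U G P) (Dim M L U G P) ℝ :=
  vecMulVec ((∑ l : Fin L, E (Tok.rel l)) + ∑ i ∈ range m, pos i) (E Tok.sep)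

theorem logit_relationKQ {m : ℕ} (hm : m ≤ P) (tok : ℕ → Tok M L U G) {t : ℕ}
    (hquery : tok (t - 1) = Tok.sep) (j : ℕ) :
    logit (relationKQ m) (fun i => (E (tok i) : Vec M L U G P)) t j =
      (if ∃ l, tok j = Tok.rel l then 1 else 0) + if t - 1 - j < m then 1 else 0 := by
  rw [logit, relationKQ, hquery, vecMulVec_mulVec, E_dotProduct, op_smul_eq_smul]
  simp only [E, if_true, one_smul]
  exact add_pos_dotProduct_relationQuery hm _ _

theorem sum_vecMulVec_attr_mulVec_E_rel (l₀ : Fin L) :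
    (∑ l : Fin L, vecMulVec (∑ u : Fin U, E (Tok.attr l u)) (E (Tok.rel l))) *ᵥ
        (E (Tok.rel l₀) : Vec M L U G P) = (∑ u : Fin U, E (Tok.attr l₀ u) : Vec M L U G P) := by
  simp only [sum_mulVec, vecMulVec_mulVec, E_dotProduct, op_smul_eq_smul]
  simp [E]

section PTSequence

variable (S : ℕ) (jstar : Fin M) (ltype : ℕ → Fin L) (mid : ℕ → ℕ → Tok M L U G)
  (a : Fin M → Fin L → Fin U)

theorem ptTok_block (k r : ℕ) (hr : r < S + 3) :
    ptTok S jstar ltype mid a (k * (S + 3) + r) =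
      if r = 0 then Tok.subj jstar
      else if r ≤ S then mid k (r - 1)
      else if r = S + 1 then Tok.sep
      else Tok.attr (ltype k) (a jstar (ltype k)) := by
  have hdiv : (k * (S + 3) + r) / (S + 3) = k := by
    rw [mul_comm, Nat.mul_add_div (by omega), Nat.div_eq_of_lt hr, add_zero]
  have hmod : (k * (S + 3) + r) % (S + 3) = r := by
    rw [mul_comm, Nat.mul_add_mod, Nat.mod_eq_of_lt hr]
  simp only [ptTok, hdiv, hmod]

theorem ptTok_block_sep (k : ℕ) : ptTok S jstar ltype mid a (k * (S + 3) + (S + 1)) = Tok.sep := by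
  rw [ptTok_block S jstar ltype mid a k (S + 1) (by omega)]
  simp

theorem ptTok_block_mid (k : ℕ) {i : ℕ} (hi : i < S) :
    ptTok S jstar ltype mid a (k * (S + 3) + (i + 1)) = mid k i := by
  rw [ptTok_block S jstar ltype mid a k (i + 1) (by omega)]
  simp [show i + 1 ≤ S by omega]

variable {S jstar ltype mid a}

theorem eq_of_ptTok_eq_rel {k i₀ j : ℕ} {l : Fin L}
    (hgram : ∀ i < S, i ≠ i₀ → ∃ g : Fin G, mid k i = Tok.gram g)
    (hlo : k * (S + 3) ≤ j) (hhi : j ≤ k * (S + 3) + (S + 1))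
    (h : ptTok S jstar ltype mid a j = Tok.rel l) : j = k * (S + 3) + (i₀ + 1) := by
  obtain ⟨r, rfl⟩ := Nat.exists_eq_add_of_le hlo
  rw [ptTok_block S jstar ltype mid a k r (by omega)] at h
  split_ifs at h with h0 hS
  · obtain rfl | hne := eq_or_ne (r - 1) i₀
    · omega
    · obtain ⟨g, hg⟩ := hgram (r - 1) (by omega) hne
      simp [hg] at h

/-- The relation token of the last block is the only relation token among the last `S + 2`
positions, which are the ones `relationKQ (S + 2)` rewards. -/
theorem logit_relationKQ_ptTok_lt {n i₀ j : ℕ} (hS : S + 2 ≤ P) (hi₀ : i₀ < S)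
    (hrel : mid n i₀ = Tok.rel (ltype n))
    (hgram : ∀ i < S, i ≠ i₀ → ∃ g : Fin G, mid n i = Tok.gram g)
    (hj : j < n * (S + 3) + (S + 2)) (hne : j ≠ n * (S + 3) + (i₀ + 1)) :
    logit (relationKQ (P := P) (S + 2)) (fun t => E (ptTok S jstar ltype mid a t))
        (n * (S + 3) + (S + 2)) j <
      logit (relationKQ (P := P) (S + 2)) (fun t => E (ptTok S jstar ltype mid a t))
        (n * (S + 3) + (S + 2)) (n * (S + 3) + (i₀ + 1)) := by
  have hquery : ptTok S jstar ltype mid a (n * (S + 3) + (S + 2) - 1) = Tok.sep :=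
    ptTok_block_sep S jstar ltype mid a n
  have hj₀ : ptTok S jstar ltype mid a (n * (S + 3) + (i₀ + 1)) = Tok.rel (ltype n) := by
    rw [ptTok_block_mid S jstar ltype mid a n hi₀, hrel]
  have hwin₀ : n * (S + 3) + (S + 2) - 1 - (n * (S + 3) + (i₀ + 1)) < S + 2 := by omega
  have hnot : ¬((∃ l, ptTok S jstar ltype mid a j = Tok.rel l) ∧
      n * (S + 3) + (S + 2) - 1 - j < S + 2) :=
    fun ⟨⟨_, hl⟩, _⟩ => hne (eq_of_ptTok_eq_rel hgram (by omega) (by omega) hl)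
  rw [logit_relationKQ hS _ hquery, logit_relationKQ hS _ hquery, if_pos hwin₀,
    if_pos (⟨ltype n, hj₀⟩ : ∃ l, _ = _)]
  split_ifs with hrelj hwin
  · exact absurd ⟨hrelj, hwin⟩ hnot
  all_goals norm_num

end PTSequence

/-- Relation head of the PT construction (β→∞ limit). -/
theorem relation_head_PT_limit
    (M L U G P S N : ℕ) (hN : 0 < N) (hP : N * (S + 3) - 1 ≤ P)
    (a : Fin M → Fin L → Fin U) (jstar : Fin M) (ltype : ℕ → Fin L)
    (mid : ℕ → ℕ → Tok M L U G) (relIdx : ℕ → ℕ)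
    (hmid : ∀ k < N, relIdx k < S ∧ mid k (relIdx k) = Tok.rel (ltype k) ∧
      ∀ i < S, i ≠ relIdx k → ∃ g : Fin G, mid k i = Tok.gram g)
    (X : ℕ → Vec M L U G P) (hX : ∀ t, X t = E (ptTok S jstar ltype mid a t))
    (T : ℕ) (hT : T = N * (S + 3) - 1)
    (pvec : Vec M L U G P) (hpvec : pvec = ∑ i ∈ Finset.range (S + 2), pos i)
    (WKQ0 WOV : Matrix (Dim M L U G P) (Dim M L U G P) ℝ)
    (hKQ : WKQ0 = Matrix.vecMulVec ((∑ l : Fin L, E (Tok.rel l)) + pvec) (E Tok.sep))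
    (hOV : WOV = ∑ l : Fin L,
      Matrix.vecMulVec (∑ u : Fin U, E (Tok.attr l u)) (E (Tok.rel l))) :
    Filter.Tendsto (fun β : ℝ => gHead (β • WKQ0) X T) Filter.atTop
      (𝓝 (E (Tok.rel (ltype (N - 1))))) ∧
    Filter.Tendsto (fun β : ℝ => WOV.mulVec (gHead (β • WKQ0) X T)) Filter.atTop
      (𝓝 (∑ u : Fin U, E (Tok.attr (ltype (N - 1)) u))) := by
  obtain ⟨n, rfl⟩ : ∃ n, N = n + 1 := ⟨N - 1, by omega⟩
  obtain ⟨hi₀, hrel, hgram⟩ := hmid n n.lt_succ_self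
  obtain rfl : X = fun t => E (ptTok S jstar ltype mid a t) := funext hX
  subst hT
  have hlast : (n + 1) * (S + 3) - 1 = n * (S + 3) + (S + 2) := by ring_nf; omega
  have hSP : S + 2 ≤ P := by omega
  rw [Nat.add_sub_cancel, hlast]
  have hKQ' : WKQ0 = relationKQ (S + 2) := by rw [hKQ, hpvec, relationKQ]
  have hhead : Tendsto (fun β : ℝ => gHead (β • WKQ0) (fun t => E (ptTok S jstar ltype mid a t))
      (n * (S + 3) + (S + 2))) atTop (𝓝 (E (Tok.rel (ltype n)))) := by
    rw [← hrel, ← ptTok_block_mid S jstar ltype mid a n hi₀, hKQ']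
    exact tendsto_gHead_smul_atTop (by omega) fun j hj hne =>
      logit_relationKQ_ptTok_lt hSP hi₀ hrel hgram hj hne
  refine ⟨hhead, ?_⟩
  rw [hOV, ← sum_vecMulVec_attr_mulVec_E_rel]
  exact ((continuous_const.matrix_mulVec continuous_id).tendsto _).comp hhead

end CR
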